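/- Let U be a nonnegative L×L real matrix. Then there exists a probability vector λ ∈ Δ(L) that is an invariant measure of U, i.e., for every l, Σ_{k} λ(k)·U^{kl} = λ(l)·Σ_{k} U^{lk}. -/

import Mathlib

/-!
With `netInflow U v l = ∑ k, v k * U k l - v l * ∑ k, U l k`, an invariant measure is a point
of the simplex where this linear map vanishes. Since it conserves total mass and only removes mass
from `l` in proportion to `v l`, a small enough step `v ↦ v + c⁻¹ • netInflow U v` maps the
simplex into itself. A continuous linear self-map of a compact convex set has a fixed point: a
limit point of the Cesàro averages of an orbit, whose defect `T a - a` is `O(1/n)`.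
-/

open Finset Filter Topology

section CesaroFixedPoint

variable {E : Type*} [NormedAddCommGroup E] [NormedSpace ℝ E]

noncomputable def cesaroAverage (T : E → E) (x : E) (n : ℕ) : E :=
  ((n : ℝ) + 1)⁻¹ • ∑ i ∈ range (n + 1), T^[i] x

theorem Convex.cesaroAverage_mem {K : Set E} (hK : Convex ℝ K) {T : E → E}
    (hT : Set.MapsTo T K K) {x : E} (hx : x ∈ K) (n : ℕ) : cesaroAverage T x n ∈ K := by
  rw [cesaroAverage, smul_sum]
  refine hK.sum_mem (fun _ _ => by positivity) ?_ fun i _ => hT.iterate i hx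
  rw [sum_const, card_range, nsmul_eq_mul]
  push_cast
  exact mul_inv_cancel₀ (by positivity)

theorem map_cesaroAverage_sub (T : E →L[ℝ] E) (x : E) (n : ℕ) :
    T (cesaroAverage T x n) - cesaroAverage T x n = ((n : ℝ) + 1)⁻¹ • (T^[n + 1] x - x) := by
  have hshift (i : ℕ) : T (T^[i] x) = T^[i + 1] x := (Function.iterate_succ_apply' T i x).symm
  rw [cesaroAverage, map_smul, map_sum, ← smul_sub, ← sum_sub_distrib]
  simp only [hshift]
  rw [sum_range_sub (fun i => T^[i] x), Function.iterate_zero_apply]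

theorem tendsto_map_cesaroAverage_sub {K : Set E} (hK : Bornology.IsBounded K) (T : E →L[ℝ] E)
    {x : E} (horbit : ∀ n, T^[n] x ∈ K) :
    Tendsto (fun n => T (cesaroAverage T x n) - cesaroAverage T x n) atTop (𝓝 0) := by
  obtain ⟨C, hC⟩ := Metric.isBounded_iff.1 hK
  simp only [map_cesaroAverage_sub]
  refine (tendsto_inv_atTop_zero.comp (tendsto_atTop_add_const_right _ 1
    tendsto_natCast_atTop_atTop)).zero_smul_isBoundedUnder_le
    ⟨C, eventually_map.2 (Eventually.of_forall fun n => ?_)⟩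
  simpa [dist_eq_norm] using hC (horbit (n + 1)) (horbit 0)

theorem ContinuousLinearMap.exists_fixedPoint_of_mapsTo {K : Set E} (hKc : IsCompact K)
    (hKv : Convex ℝ K) (hKne : K.Nonempty) (T : E →L[ℝ] E) (hT : Set.MapsTo T K K) :
    ∃ x ∈ K, T x = x := by
  obtain ⟨x₀, hx₀⟩ := hKne
  obtain ⟨x, hxK, φ, hφ, hlim⟩ := hKc.tendsto_subseq (hKv.cesaroAverage_mem hT hx₀)
  have hdefect_zero := (tendsto_map_cesaroAverage_sub hKc.isBounded T
    (fun n => hT.iterate n hx₀)).comp hφ.tendsto_atTop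
  have hdefect_lim :
      Tendsto (fun n => T (cesaroAverage T x₀ (φ n)) - cesaroAverage T x₀ (φ n)) atTop
        (𝓝 (T x - x)) := ((T.continuous.tendsto x).comp hlim).sub hlim
  exact ⟨x, hxK, sub_eq_zero.1 (tendsto_nhds_unique hdefect_lim hdefect_zero)⟩

end CesaroFixedPoint

section NetInflow

variable {L : Type*} [Fintype L]

def netInflow (U : L → L → ℝ) : (L → ℝ) →ₗ[ℝ] (L → ℝ) where
  toFun v l := ∑ k, v k * U k l - v l * ∑ k, U l k
  map_add' v w := by ext l; simp only [Pi.add_apply, add_mul, sum_add_distrib]; ring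
  map_smul' a v := by
    ext l
    simp only [Pi.smul_apply, smul_eq_mul, RingHom.id_apply, mul_sub, mul_sum, mul_assoc]

theorem netInflow_apply (U : L → L → ℝ) (v : L → ℝ) (l : L) :
    netInflow U v l = ∑ k, v k * U k l - v l * ∑ k, U l k := rfl

theorem sum_netInflow (U : L → L → ℝ) (v : L → ℝ) : ∑ l, netInflow U v l = 0 := by
  simp only [netInflow_apply, sum_sub_distrib, mul_sum]
  rw [sum_comm, sub_self]

theorem add_smul_netInflow_mem_stdSimplex {U : L → L → ℝ} (hU : ∀ l k, 0 ≤ U l k)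
    {c : ℝ} (hc : 0 < c) (hrow : ∀ l, ∑ k, U l k ≤ c) {v : L → ℝ}
    (hv : v ∈ stdSimplex ℝ L) :
    v + c⁻¹ • netInflow U v ∈ stdSimplex ℝ L := by
  refine ⟨fun l => ?_, ?_⟩
  · have hstay : 0 ≤ v l * (c - ∑ k, U l k) := mul_nonneg (hv.1 l) (sub_nonneg.2 (hrow l))
    have hin : 0 ≤ ∑ k, v k * U k l := sum_nonneg fun k _ => mul_nonneg (hv.1 k) (hU k l)
    have hexpand : (v + c⁻¹ • netInflow U v) l
        = c⁻¹ * (v l * (c - ∑ k, U l k) + ∑ k, v k * U k l) := by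
      simp only [Pi.add_apply, Pi.smul_apply, smul_eq_mul, netInflow_apply]
      field_simp
      ring
    rw [hexpand]
    positivity
  · simp only [Pi.add_apply, Pi.smul_apply, smul_eq_mul, sum_add_distrib, ← mul_sum,
      sum_netInflow, mul_zero, add_zero, hv.2]

end NetInflow

theorem exists_invariant_measure {L : Type*} [Fintype L] [Nonempty L]
    (U : L → L → ℝ) (hU : ∀ l k, 0 ≤ U l k) :
    ∃ lam : L → ℝ, (∀ l, 0 ≤ lam l) ∧ (∑ l, lam l = 1) ∧
      ∀ l, ∑ k, lam k * U k l = lam l * ∑ k, U l k := by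
  set c : ℝ := 1 + ∑ l, ∑ k, U l k
  have hrow_nonneg (l : L) : 0 ≤ ∑ k, U l k := sum_nonneg fun k _ => hU l k
  have hc : 0 < c := add_pos_of_pos_of_nonneg one_pos (sum_nonneg fun l _ => hrow_nonneg l)
  have hrow (l : L) : ∑ k, U l k ≤ c :=
    (single_le_sum (fun l _ => hrow_nonneg l) (mem_univ l)).trans
      (le_add_of_nonneg_left zero_le_one)
  let T : (L → ℝ) →L[ℝ] (L → ℝ) :=
    .id ℝ _ + c⁻¹ • LinearMap.toContinuousLinearMap (netInflow U)
  obtain ⟨lam, hlam, hfix⟩ := T.exists_fixedPoint_of_mapsTo (isCompact_stdSimplex ℝ L)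
    (convex_stdSimplex ℝ L) (isPathConnected_stdSimplex L).nonempty
    fun v hv => add_smul_netInflow_mem_stdSimplex hU hc hrow hv
  have hbalance : netInflow U lam = 0 := by simpa [T, hc.ne'] using hfix
  exact ⟨lam, hlam.1, hlam.2, fun l => sub_eq_zero.1 (congrFun hbalance l)⟩
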